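/- arXiv:math/0010255 — 3 statements merged into one kernel-verified Lean document; each statement's English description precedes it below -/
import Mathlib

section
/- Let A be a 3×3 octonionic Hermitian matrix and v = (x, y, z) ∈ 𝕆³ a normalized right eigenvector: A·v = v·λ and conj(x)·x + conj(y)·y + conj(z)·z = 1. Then v†(A·v) := ∑ⱼ conj(vⱼ)·(A·v)ⱼ = λ, where (A·v)ⱼ = ∑ₖ Aⱼₖ·vₖ. -/
noncomputable section

open Quaternion

/-- The octonions, realized as the Cayley–Dickson double of the real quaternions:
pairs of quaternions. -/
abbrev 𝕆 : Type := ℍ[ℝ] × ℍ[ℝ]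

namespace Octonion

/-- Cayley–Dickson multiplication: `(a, b)·(c, d) = (a·c − conj(d)·b, d·a + b·conj(c))`. -/
def omul (x y : 𝕆) : 𝕆 :=
  (x.1 * y.1 - star y.2 * x.2, y.2 * x.1 + x.2 * star y.1)

/-- Octonionic conjugation: `conj (a, b) = (conj a, −b)`. -/
def oconj (x : 𝕆) : 𝕆 := (star x.1, -x.2)

/-- The embedding of the reals, `r ↦ (r, 0)`. -/
def oR (r : ℝ) : 𝕆 := ((r : ℍ[ℝ]), 0)

/-- The unit octonion `1 = (1, 0)`. -/
def o1 : 𝕆 := oR 1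

/-- The associator `[a,b,c] = (a·b)·c − a·(b·c)`. -/
def oassoc (a b c : 𝕆) : 𝕆 := omul (omul a b) c - omul a (omul b c)

/-- The inner product: the real number with `(a·conj b + b·conj a)/2 = (a ⋅ b)·1`. -/
def odot (x y : 𝕆) : ℝ := (omul x (oconj y) + omul y (oconj x)).1.re / 2

/-- The squared norm `|x|²`, the real number with `x·conj x = |x|²·1`. -/
def onormSq (x : 𝕆) : ℝ := odot x x

/-- The real part of an octonion, as a real number. -/
def oreR (x : 𝕆) : ℝ := x.1.re

/-- The imaginary part `Im(x) = (x − conj x)/2`. -/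
def oIm (x : 𝕆) : 𝕆 := (2:ℝ)⁻¹ • (x - oconj x)

/-- The imaginary units. -/
def oi : 𝕆 := (⟨0,1,0,0⟩, 0)
def oj : 𝕆 := (⟨0,0,1,0⟩, 0)
def ok : 𝕆 := (⟨0,0,0,1⟩, 0)
def ol : 𝕆 := (0, 1)
def oil : 𝕆 := (0, ⟨0,1,0,0⟩)
def ojl : 𝕆 := (0, ⟨0,0,1,0⟩)
def okl : 𝕆 := (0, ⟨0,0,0,1⟩)

end Octonion


open Octonion

/-!
Substituting the eigenvalue equations, the `j`-th summand of `v†(A·v)` becomes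
`conj(vⱼ)·(vⱼ·λ)`, because the real diagonal entry commutes with `vⱼ`.
Although `𝕆` is not associative, it is alternative, so `conj(vⱼ)·(vⱼ·λ) = (conj(vⱼ)·vⱼ)·λ`;
summing over `j` and using the normalization gives `1·λ = λ`.
-/

namespace Octonion

lemma omul_add (u v w : 𝕆) : omul u (v + w) = omul u v + omul u w := by
  simp only [omul, Prod.fst_add, Prod.snd_add, Prod.mk_add_mk, Prod.mk.injEq, star_add,
    mul_add, add_mul]
  constructor <;> abel

lemma add_omul (u v w : 𝕆) : omul (u + v) w = omul u w + omul v w := by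
  simp only [omul, Prod.fst_add, Prod.snd_add, Prod.mk_add_mk, Prod.mk.injEq,
    mul_add, add_mul]
  constructor <;> abel

lemma one_omul (u : 𝕆) : omul o1 u = u := by
  simp [omul, o1, oR]

lemma oR_omul_comm (r : ℝ) (u : 𝕆) : omul (oR r) u = omul u (oR r) := by
  simp [omul, oR, Quaternion.coe_mul_eq_smul, Quaternion.mul_coe_eq_smul]

lemma oconj_omul_omul_assoc (u w : 𝕆) :
    omul (oconj u) (omul u w) = omul (omul (oconj u) u) w := by
  obtain ⟨A, B⟩ := u
  obtain ⟨C, D⟩ := w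
  ext <;> simp [omul, oconj] <;> ring

lemma oconj_omul_oR_omul_add_of_eq {t : ℝ} {u s lam : 𝕆} (h : s = omul u (lam - oR t)) :
    omul (oconj u) (omul (oR t) u + s) = omul (omul (oconj u) u) lam := by
  rw [h, oR_omul_comm, ← omul_add, add_sub_cancel, oconj_omul_omul_assoc]

end Octonion

/-- For a normalized right eigenvector `v = (x,y,z)` of the `3×3` octonionic
Hermitian matrix `A` with rows `(p, a, conj b)`, `(conj a, m, c)`, `(b, conj c, n)`,
one has `v†(A·v) = λ`. -/
theorem vdagger_Av_eq_lam (p m n : ℝ) (a b c x y z lam : 𝕆)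
    (h1 : omul a y + omul (oconj b) z = omul x (lam - oR p))
    (h2 : omul c z + omul (oconj a) x = omul y (lam - oR m))
    (h3 : omul b x + omul (oconj c) y = omul z (lam - oR n))
    (hnorm : omul (oconj x) x + omul (oconj y) y + omul (oconj z) z = o1) :
    omul (oconj x) (omul (oR p) x + omul a y + omul (oconj b) z)
      + omul (oconj y) (omul (oconj a) x + omul (oR m) y + omul c z)
      + omul (oconj z) (omul b x + omul (oconj c) y + omul (oR n) z) = lam := by
  have row1 : omul (oconj x) (omul (oR p) x + omul a y + omul (oconj b) z)
      = omul (omul (oconj x) x) lam := by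
    rw [← oconj_omul_oR_omul_add_of_eq h1, add_assoc]
  have row2 : omul (oconj y) (omul (oconj a) x + omul (oR m) y + omul c z)
      = omul (omul (oconj y) y) lam := by
    rw [← oconj_omul_oR_omul_add_of_eq h2]; congr 1; abel
  have row3 : omul (oconj z) (omul b x + omul (oconj c) y + omul (oR n) z)
      = omul (omul (oconj z) z) lam := by
    rw [← oconj_omul_oR_omul_add_of_eq h3]; congr 1; abel
  rw [row1, row2, row3, ← add_omul, ← add_omul, hnorm, one_omul]
end
end

section
/- Let A be a 3×3 octonionic Hermitian matrix and suppose A·v = v·λ for v = (x, y, z) ∈ 𝕆³ and λ ∈ 𝕆. Then x ⋅ (a·y) + z ⋅ (b·x) = |x|²·(Re(λ) − p), where Re(λ) is regarded as a real number. -/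
noncomputable section

open Quaternion

open Octonion

/-!
Pair the first row of the eigenvalue equation, `a·y + conj(b)·z = x·(λ − p)`, with `x`.
Left multiplication by `conj b` is adjoint to left multiplication by `b`, so
`x ⋅ (conj(b)·z) = z ⋅ (b·x)`; and `x ⋅ (x·w) = |x|² Re(w)` for every `w`, so the right-hand
side becomes `|x|² (Re(λ) − p)`. Both identities are checked in quaternion coordinates.
-/

namespace Octonion

theorem odot_eq (x y : 𝕆) : odot x y = (x.1 * star y.1).re + (x.2 * star y.2).re := by
  simp only [odot, omul, oconj, star_neg, neg_mul, sub_neg_eq_add, star_star, Prod.mk_add_mk,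
    re_add, re_mul, re_star, imI_star, imJ_star, imK_star, mul_neg]
  ring

theorem odot_add_right (x u v : 𝕆) : odot x (u + v) = odot x u + odot x v := by
  simp only [odot_eq, Prod.fst_add, Prod.snd_add, star_add, mul_add, re_add]
  ring

theorem odot_omul_oconj (b x z : 𝕆) : odot x (omul (oconj b) z) = odot z (omul b x) := by
  simp only [odot_eq, omul, oconj, star_add, star_sub, star_neg, star_mul, star_star, mul_neg,
    neg_mul, neg_neg, sub_neg_eq_add, re_add, re_sub, re_neg, re_mul, re_star,
    imI_star, imJ_star, imK_star, imI_add, imJ_add, imK_add, imI_sub, imJ_sub, imK_sub,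
    imI_neg, imJ_neg, imK_neg, imI_mul, imJ_mul, imK_mul]
  ring

theorem odot_self_omul (x w : 𝕆) : odot x (omul x w) = onormSq x * oreR w := by
  simp only [onormSq, oreR, odot_eq, omul, star_add, star_sub, star_mul, star_star, mul_neg,
    neg_mul, neg_neg, sub_neg_eq_add, re_add, re_sub, re_mul, re_star,
    imI_star, imJ_star, imK_star, imI_add, imJ_add, imK_add, imI_sub, imJ_sub, imK_sub,
    imI_mul, imJ_mul, imK_mul]
  ring

theorem oreR_sub_oR (w : 𝕆) (r : ℝ) : oreR (w - oR r) = oreR w - r := by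
  simp [oreR, oR]

end Octonion

theorem re_lam_formula_general (p : ℝ) (a b x y z lam : 𝕆)
    (h1 : omul a y + omul (oconj b) z = omul x (lam - oR p)) :
    odot x (omul a y) + odot z (omul b x) = onormSq x * (oreR lam - p) := by
  have h := congrArg (odot x) h1
  rwa [odot_add_right, odot_omul_oconj, odot_self_omul, oreR_sub_oR] at h

/-- If `A·v = v·λ` for the `3×3` octonionic Hermitian matrix `A` and
`v = (x,y,z)`, then `x ⋅ (a·y) + z ⋅ (b·x) = |x|²·(Re(λ) − p)`. -/
theorem re_lam_formula (p m n : ℝ) (a b c x y z lam : 𝕆)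
    (h1 : omul a y + omul (oconj b) z = omul x (lam - oR p))
    (h2 : omul c z + omul (oconj a) x = omul y (lam - oR m))
    (h3 : omul b x + omul (oconj c) y = omul z (lam - oR n)) :
    odot x (omul a y) + odot z (omul b x) = onormSq x * (oreR lam - p) :=
  re_lam_formula_general p a b x y z lam h1
end
end

section
/- Let p, q, θ ∈ ℝ, s := cos(θ)·1 + sin(θ)·kℓ, and let B be the 3×3 octonionic Hermitian matrix with rows (p, q·i, q·(k·s)), (−q·i, p, q·j), (−q·(k·s), −q·j, p). For (ε, S) equal to (+1, −kℓ) or (−1, 1), the following right-eigenvalue relations hold, where a vector is multiplied by S componentwise on the right: B·((i, 0, j)·S) = ((i, 0, j)·S)·(p + ε·q·conj(s)); B·((j, 2·k·s, i)·S) = ((j, 2·k·s, i)·S)·(p + ε·q·conj(s)); and B·((j, −k·s, i)·S) = ((j, −k·s, i)·S)·(p − 2·ε·q·conj(s)). -/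
noncomputable section

open Quaternion

open Octonion

/-- The action of a `3×3` octonionic matrix on a column vector:
`(B·v)ₐ = ∑ᵦ Bₐᵦ·vᵦ`. -/
def mvec (B : Fin 3 → Fin 3 → 𝕆) (u : Fin 3 → 𝕆) : Fin 3 → 𝕆 :=
  fun α => ∑ β, omul (B α β) (u β)

/-- `s = cos θ + sin θ kℓ`. -/
def sB (θ : ℝ) : 𝕆 := Real.cos θ • o1 + Real.sin θ • okl

/-- The matrix `B` of Example 1, with rows `(p, qi, q(ks))`, `(−qi, p, qj)`,
`(−q(ks), −qj, p)`. -/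
def Bmat (p q θ : ℝ) : Fin 3 → Fin 3 → 𝕆 :=
  ![![oR p, q • oi, q • omul ok (sB θ)],
    ![-(q • oi), oR p, q • oj],
    ![-(q • omul ok (sB θ)), -(q • oj), oR p]]

/-!
Real scalars are central in `𝕆` and associate with everything, so `B = p·1 + q·A` with `A`
the off-diagonal part, and `v·(p + λ q conj s) = p v + q (v·(λ conj s))`. Each relation thus
reduces to `A v = v·(λ conj s)` with `λ ∈ {ε, −2ε}`, which is checked in the coordinates of the
Cayley–Dickson pairs; the only relation it needs is `cos²θ + sin²θ = 1`.
-/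

namespace Octonion

theorem omul_add_s16 (x y z : 𝕆) : omul x (y + z) = omul x y + omul x z := by
  ext1 <;> simp only [omul, Prod.fst_add, Prod.snd_add, star_add, mul_add, add_mul] <;> abel

theorem omul_smul (r : ℝ) (x y : 𝕆) : omul x (r • y) = r • omul x y := by
  ext1 <;> simp [omul, smul_sub]

theorem smul_omul (r : ℝ) (x y : 𝕆) : omul (r • x) y = r • omul x y := by
  ext1 <;> simp [omul, smul_sub]

theorem neg_omul (x y : 𝕆) : omul (-x) y = -omul x y := by
  simpa using smul_omul (-1) x y

theorem zero_omul (x : 𝕆) : omul 0 x = 0 := by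
  simpa using smul_omul 0 x x

theorem omul_oR (r : ℝ) (x : 𝕆) : omul x (oR r) = r • x := by
  ext1 <;> simp [omul, oR, Quaternion.mul_coe_eq_smul]

theorem oR_omul (r : ℝ) (x : 𝕆) : omul (oR r) x = r • x := by
  ext1 <;> simp [omul, oR, Quaternion.mul_coe_eq_smul, Quaternion.coe_mul_eq_smul]

end Octonion

def IsRightEigenvector (A : Fin 3 → Fin 3 → 𝕆) (v : Fin 3 → 𝕆) (μ : 𝕆) : Prop :=
  mvec A v = fun α => omul (v α) μ

def Amat (s : 𝕆) : Fin 3 → Fin 3 → 𝕆 :=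
  ![![0, oi, omul ok s],
    ![-oi, 0, oj],
    ![-omul ok s, -oj, 0]]

theorem mvec_Bmat (p q θ : ℝ) (v : Fin 3 → 𝕆) :
    mvec (Bmat p q θ) v = p • v + q • mvec (Amat (sB θ)) v := by
  funext α
  fin_cases α <;>
    simp [mvec, Bmat, Amat, Fin.sum_univ_three, oR_omul, smul_omul, neg_omul, zero_omul] <;>
    module

theorem IsRightEigenvector.Bmat_of_Amat {p q θ r : ℝ} {v : Fin 3 → 𝕆} {μ : 𝕆}
    (h : IsRightEigenvector (Amat (sB θ)) v (r • μ)) :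
    IsRightEigenvector (Bmat p q θ) v (oR p + (r * q) • μ) := by
  unfold IsRightEigenvector at h ⊢
  rw [mvec_Bmat, h]
  funext α
  simp only [Pi.add_apply, Pi.smul_apply, omul_add_s16, omul_oR, omul_smul]
  module

open Quaternion in
set_option maxHeartbeats 1000000 in
theorem isRightEigenvector_Amat {c σ ε : ℝ} {S : 𝕆} (hcσ : c ^ 2 + σ ^ 2 = 1)
    (hεS : (ε = 1 ∧ S = -okl) ∨ (ε = -1 ∧ S = o1)) :
    let s := c • o1 + σ • okl
    IsRightEigenvector (Amat s) ![omul oi S, omul 0 S, omul oj S] (ε • oconj s) ∧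
    IsRightEigenvector (Amat s) ![omul oj S, omul ((2:ℝ) • omul ok s) S, omul oi S]
      (ε • oconj s) ∧
    IsRightEigenvector (Amat s) ![omul oj S, omul (-omul ok s) S, omul oi S]
      ((-(2 * ε)) • oconj s) := by
  unfold IsRightEigenvector
  obtain ⟨rfl, rfl⟩ | ⟨rfl, rfl⟩ := hεS <;> refine ⟨?_, ?_, ?_⟩ <;> funext α <;> fin_cases α <;>
    simp [mvec, Amat, Fin.sum_univ_three, omul, oconj, o1, oR, Prod.ext_iff] <;>
    -- the units are unfolded only now: `simp` does not compute products of quaternion literals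
    simp only [Quaternion.ext_iff, re_mul, imI_mul, imJ_mul, imK_mul, re_add, imI_add, imJ_add,
      imK_add, re_sub, imI_sub, imJ_sub, imK_sub, re_neg, imI_neg, imJ_neg, imK_neg, re_smul,
      imI_smul, imJ_smul, imK_smul, re_star, imI_star, imJ_star, imK_star, smul_eq_mul] <;>
    simp [oi, oj, ok, okl] <;> grind

/-- The non-real right eigenvectors of Example 1:
for `(ε, S) = (+1, −kℓ)` or `(−1, 1)`,
`B·((i,0,j)·S) = ((i,0,j)·S)·(p + εq conj s)`,
`B·((j,2ks,i)·S) = ((j,2ks,i)·S)·(p + εq conj s)`, and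
`B·((j,−ks,i)·S) = ((j,−ks,i)·S)·(p − 2εq conj s)`. -/
theorem example1_eigenvectors (p q θ ε : ℝ) (S : 𝕆)
    (hεS : (ε = 1 ∧ S = -okl) ∨ (ε = -1 ∧ S = o1)) :
    mvec (Bmat p q θ) ![omul oi S, omul 0 S, omul oj S]
        = (fun α => omul (![omul oi S, omul 0 S, omul oj S] α)
            (oR p + (ε * q) • oconj (sB θ)))
    ∧ mvec (Bmat p q θ) ![omul oj S, omul ((2:ℝ) • omul ok (sB θ)) S, omul oi S]
        = (fun α => omul (![omul oj S, omul ((2:ℝ) • omul ok (sB θ)) S, omul oi S] α)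
            (oR p + (ε * q) • oconj (sB θ)))
    ∧ mvec (Bmat p q θ) ![omul oj S, omul (-omul ok (sB θ)) S, omul oi S]
        = (fun α => omul (![omul oj S, omul (-omul ok (sB θ)) S, omul oi S] α)
            (oR p - (2 * ε * q) • oconj (sB θ))) := by
  obtain ⟨h₁, h₂, h₃⟩ := isRightEigenvector_Amat (Real.cos_sq_add_sin_sq θ) hεS
  refine ⟨h₁.Bmat_of_Amat, h₂.Bmat_of_Amat, ?_⟩
  rw [sub_eq_add_neg, ← neg_smul, ← neg_mul]
  exact h₃.Bmat_of_Amat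
end
end
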